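/- arXiv:0810.2853 — 6 statements merged into one kernel-verified Lean document; each statement's English description precedes it below -/
import Mathlib

section
/- Let d ≥ 3 be odd. For each k ∈ {0,…,d−2}, let W_k ∈ ℤ^d be the vector with entry −1 in position k, entry 2 in position k+1, entry −1 in position k+2 (indices taken mod d), and 0 elsewhere. Then the W_k generate the subgroup W of ℤ^d consisting of vectors (e_j) with Σ e_j = 0 and Σ j·e_j ≡ 0 (mod d). -/
lemma Lshift (g : ℕ → ℤ) (s m : ℕ) : ∀ n, ∑ k ∈ Finset.range n, (if m = k + s then g k else 0)
    = if s ≤ m ∧ m < n + s then g (m - s) else 0 := by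
  intro n
  induction n with
  | zero => simp
  | succ n ih =>
    rw [Finset.sum_range_succ, ih]
    by_cases h : m = n + s
    · rw [if_neg (by omega), if_pos h, if_pos (by omega)]
      subst h; simp
    · rw [if_neg h, add_zero]
      by_cases h2 : s ≤ m ∧ m < n + s
      · rw [if_pos h2, if_pos (by omega)]
      · rw [if_neg h2, if_neg (by omega)]

lemma Lshift0 (g : ℕ → ℤ) (m n : ℕ) : ∑ k ∈ Finset.range n, (if m = k then g k else 0)
    = if m < n then g m else 0 := by
  have := Lshift g 0 m n
  simpa using this

lemma Ldouble (f : ℕ → ℤ) : ∀ n, ∑ k ∈ Finset.range n, ∑ i ∈ Finset.range (k+1), f i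
    = ∑ i ∈ Finset.range n, ((n:ℤ) - i) * f i := by
  intro n
  induction n with
  | zero => simp
  | succ n ih =>
    rw [Finset.sum_range_succ, ih]
    have key : ∑ i ∈ Finset.range (n+1), (((n+1:ℕ):ℤ) - i) * f i
        = (∑ i ∈ Finset.range n, ((n:ℤ) - i) * f i) + ((∑ i ∈ Finset.range n, f i) + f n) := by
      rw [Finset.sum_range_succ]
      push_cast
      have h2 : ∀ i ∈ Finset.range n, ((n:ℤ) + 1 - i) * f i = ((n:ℤ) - i) * f i + f i :=
        fun i _ => by ring
      rw [Finset.sum_congr rfl h2, Finset.sum_add_distrib]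
      ring
    rw [key, Finset.sum_range_succ]

lemma sumFinIf (d r : ℕ) (hr : r < d) (c : ℤ) :
    ∑ j : Fin d, (if (j : ℕ) = r then c else 0) = c := by
  rw [Fin.sum_univ_eq_sum_range (fun i => if i = r then c else 0) d,
    Finset.sum_ite_eq' (Finset.range d) r (fun _ => c)]
  simp [hr]

lemma sumFinIfMul (d r : ℕ) (hr : r < d) (c : ℤ) :
    ∑ j : Fin d, (j : ℤ) * (if (j : ℕ) = r then c else 0) = (r : ℤ) * c := by
  have h1 : ∀ j : Fin d, (j : ℤ) * (if (j : ℕ) = r then c else 0)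
      = (fun i : ℕ => if i = r then (i : ℤ) * c else 0) (j : ℕ) := by
    intro j; simp only []; split_ifs <;> simp
  rw [Finset.sum_congr rfl (fun j _ => h1 j),
    Fin.sum_univ_eq_sum_range (fun i : ℕ => if i = r then (i : ℤ) * c else 0) d,
    Finset.sum_ite_eq' (Finset.range d) r (fun i : ℕ => (i : ℤ) * c)]
  simp [hr]

theorem stmt_3 (d : ℕ) (hd : 3 ≤ d) (hodd : Odd d)
    (W : AddSubgroup (Fin d → ℤ))
    (hW : ∀ e : Fin d → ℤ, e ∈ W ↔
      ((∑ j : Fin d, e j) = 0 ∧ (d : ℤ) ∣ ∑ j : Fin d, (j : ℤ) * e j)) :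
    AddSubgroup.closure
      {v : Fin d → ℤ | ∃ k : ℕ, k ≤ d - 2 ∧ v = fun j : Fin d =>
        (if (j : ℕ) = k % d then (-1 : ℤ) else 0) +
        (if (j : ℕ) = (k + 1) % d then 2 else 0) +
        (if (j : ℕ) = (k + 2) % d then -1 else 0)} = W := by
  have hd0 : 0 < d := by omega
  apply le_antisymm
  · rw [AddSubgroup.closure_le]
    rintro v ⟨k, hk, rfl⟩
    rw [SetLike.mem_coe, hW]
    constructor
    · rw [Finset.sum_add_distrib, Finset.sum_add_distrib,
        sumFinIf d (k % d) (Nat.mod_lt _ hd0) (-1),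
        sumFinIf d ((k+1) % d) (Nat.mod_lt _ hd0) 2,
        sumFinIf d ((k+2) % d) (Nat.mod_lt _ hd0) (-1)]
      norm_num
    · simp only [mul_add]
      rw [Finset.sum_add_distrib, Finset.sum_add_distrib,
        sumFinIfMul d (k % d) (Nat.mod_lt _ hd0) (-1),
        sumFinIfMul d ((k+1) % d) (Nat.mod_lt _ hd0) 2,
        sumFinIfMul d ((k+2) % d) (Nat.mod_lt _ hd0) (-1)]
      have e1 : k % d = k := Nat.mod_eq_of_lt (by omega)
      have e2 : (k+1) % d = k+1 := Nat.mod_eq_of_lt (by omega)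
      by_cases h : k + 2 < d
      · have e3 : (k+2) % d = k+2 := Nat.mod_eq_of_lt h
        rw [e1, e2, e3]
        have : (k : ℤ) * (-1) + ((k:ℤ)+1) * 2 + ((k:ℤ)+2) * (-1) = 0 := by ring
        push_cast
        rw [this]
        exact dvd_zero _
      · have hk2 : k = d - 2 := by omega
        have e3 : (k+2) % d = 0 := by rw [show k + 2 = d by omega, Nat.mod_self]
        rw [e1, e2, e3]
        refine ⟨1, ?_⟩
        push_cast
        have : (k : ℤ) = (d : ℤ) - 2 := by
          rw [hk2]; push_cast [Nat.cast_sub (by omega : 2 ≤ d)]; ring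
        rw [this]; ring
  · intro e he
    rw [hW e] at he
    obtain ⟨hsum, hdvd⟩ := he
    obtain ⟨t, ht⟩ := hdvd
    obtain ⟨E, hE⟩ : ∃ E : ℕ → ℤ, E = fun i => if h : i < d then e ⟨i, h⟩ else 0 := ⟨_, rfl⟩
    obtain ⟨C, hC⟩ : ∃ C : ℕ → ℤ, C = fun k => ∑ i ∈ Finset.range (k+1), E i := ⟨_, rfl⟩
    obtain ⟨A, hA⟩ : ∃ A : ℕ → ℤ,
      A = fun k => -(∑ j ∈ Finset.range (k+1), C j) - ((k:ℤ)+1) * t := ⟨_, rfl⟩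
    have hEe : ∀ j : Fin d, E (j : ℕ) = e j := by
      intro j; rw [hE]; exact dif_pos j.isLt
    have hErange : ∑ i ∈ Finset.range d, E i = 0 := by
      rw [← Fin.sum_univ_eq_sum_range E d]
      rw [Finset.sum_congr rfl (fun j _ => hEe j)]
      exact hsum
    have hIrange : ∑ i ∈ Finset.range d, (i : ℤ) * E i = (d : ℤ) * t := by
      rw [← Fin.sum_univ_eq_sum_range (fun i => (i : ℤ) * E i) d]
      rw [Finset.sum_congr rfl (fun j _ => by rw [hEe j] :
        ∀ j : Fin d, j ∈ Finset.univ → ((j:ℕ):ℤ) * E (j:ℕ) = (j : ℤ) * e j)]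
      exact ht
    have hCrec : ∀ k, C (k+1) = C k + E (k+1) := by
      intro k; simp only [hC]; exact Finset.sum_range_succ E (k+1)
    have hC0 : C 0 = E 0 := by simp [hC]
    have hClast : C (d-1) = 0 := by
      simp only [hC]
      rw [show d - 1 + 1 = d by omega]
      exact hErange
    have hSC : ∑ k ∈ Finset.range (d-1), C k = -((d : ℤ) * t) := by
      simp only [hC]
      rw [Ldouble E (d-1)]
      have hext : ∑ i ∈ Finset.range (d-1), (((d-1:ℕ):ℤ) - i) * E i
          = ∑ i ∈ Finset.range d, (((d-1:ℕ):ℤ) - i) * E i := by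
        rw [show d = (d-1) + 1 by omega, Finset.sum_range_succ]
        rw [show (d-1) + 1 - 1 = d - 1 by omega]
        simp
      rw [hext]
      have : ∀ i ∈ Finset.range d, (((d-1:ℕ):ℤ) - i) * E i
          = ((d-1:ℕ):ℤ) * E i - (i:ℤ) * E i := fun i _ => by ring
      rw [Finset.sum_congr rfl this, Finset.sum_sub_distrib, ← Finset.mul_sum, hErange, hIrange]
      ring
    have hArec : ∀ k, A (k+1) = A k - C (k+1) - t := by
      intro k
      simp only [hA]
      rw [Finset.sum_range_succ]
      push_cast
      ring
    have hA0 : A 0 = -C 0 - t := by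
      simp only [hA]
      rw [show (0:ℕ) + 1 = 1 by rfl, Finset.sum_range_one]
      push_cast
      ring
    have hAlast : A (d-2) = t := by
      simp only [hA]
      rw [show d - 2 + 1 = d - 1 by omega, hSC]
      have : ((d-2:ℕ):ℤ) = (d:ℤ) - 2 := by push_cast [Nat.cast_sub (by omega : 2 ≤ d)]; ring
      rw [this]
      ring
    have key : e = ∑ k ∈ Finset.range (d-1), A k • (fun j : Fin d =>
        (if (j : ℕ) = k % d then (-1 : ℤ) else 0) +
        (if (j : ℕ) = (k + 1) % d then 2 else 0) +
        (if (j : ℕ) = (k + 2) % d then -1 else 0)) := by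
      funext j
      simp only [Finset.sum_apply, Pi.smul_apply, smul_eq_mul]
      rw [← hEe j]
      rw [show d - 1 = d - 2 + 1 by omega, Finset.sum_range_succ]
      have hmid : ∀ k ∈ Finset.range (d-2), A k * ((if (j:ℕ) = k % d then (-1:ℤ) else 0) +
          (if (j:ℕ) = (k + 1) % d then 2 else 0) + (if (j:ℕ) = (k + 2) % d then -1 else 0))
          = (if (j:ℕ) = k then -A k else 0) + (if (j:ℕ) = k + 1 then 2 * A k else 0) +
            (if (j:ℕ) = k + 2 then -A k else 0) := by
        intro k hk
        rw [Finset.mem_range] at hk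
        rw [Nat.mod_eq_of_lt (by omega), Nat.mod_eq_of_lt (by omega),
          Nat.mod_eq_of_lt (by omega)]
        split_ifs <;> ring
      rw [Finset.sum_congr rfl hmid, Finset.sum_add_distrib, Finset.sum_add_distrib,
        Lshift0 (fun k => -A k) (j:ℕ) (d-2),
        Lshift (fun k => 2 * A k) 1 (j:ℕ) (d-2),
        Lshift (fun k => -A k) 2 (j:ℕ) (d-2)]
      rw [Nat.mod_eq_of_lt (by omega : d - 2 < d),
        show d - 2 + 1 = d - 1 by omega, Nat.mod_eq_of_lt (by omega : d - 1 < d),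
        show d - 2 + 2 = d by omega, Nat.mod_self]
      have hjlt : (j : ℕ) < d := j.isLt
      by_cases hm0 : (j : ℕ) = 0
      · rw [hm0]
        split_ifs <;> first | (exfalso; omega) | (ring_nf; linarith [hA0, hAlast, hC0])
      · by_cases hmd : (j : ℕ) = d - 1
        · have r1 := hArec (d-3)
          rw [show d - 3 + 1 = d - 2 by omega] at r1
          have r2 := hCrec (d-2)
          rw [show d - 2 + 1 = d - 1 by omega] at r2
          rw [hmd, show d - 1 - 2 = d - 3 by omega]
          split_ifs <;> first | (exfalso; omega) |
            (ring_nf; linarith [r1, r2, hAlast, hClast])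
        · have hm1 : 1 ≤ (j : ℕ) := by omega
          have hm2 : (j : ℕ) ≤ d - 2 := by omega
          have r1 := hArec ((j:ℕ) - 1)
          rw [show (j:ℕ) - 1 + 1 = (j:ℕ) by omega] at r1
          have r2 := hCrec ((j:ℕ) - 1)
          rw [show (j:ℕ) - 1 + 1 = (j:ℕ) by omega] at r2
          by_cases hge2 : 2 ≤ (j : ℕ)
          · have r3 := hArec ((j:ℕ) - 2)
            rw [show (j:ℕ) - 2 + 1 = (j:ℕ) - 1 by omega] at r3
            by_cases hc4 : (j : ℕ) = d - 2
            · have hAj : A ((j:ℕ)) = t := by rw [hc4]; exact hAlast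
              rw [← hc4]
              split_ifs <;> first | (exfalso; omega) |
                (ring_nf; linarith [r1, r2, r3, hAj])
            · split_ifs <;> first | (exfalso; omega) | (ring_nf; linarith [r1, r2, r3])
          · have hz : (j:ℕ) - 1 = 0 := by omega
            rw [hz] at r1 r2
            by_cases hc4 : (j : ℕ) = d - 2
            · have hAj : A ((j:ℕ)) = t := by rw [hc4]; exact hAlast
              rw [← hc4, hz]
              split_ifs <;> first | (exfalso; omega) |
                (ring_nf; linarith [r1, r2, hA0, hC0, hAj])
            · rw [hz]
              split_ifs <;> first | (exfalso; omega) |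
                (ring_nf; linarith [r1, r2, hA0, hC0])
    rw [key]
    apply AddSubgroup.sum_mem
    intro k hk
    rw [Finset.mem_range] at hk
    refine AddSubgroup.zsmul_mem _ (AddSubgroup.subset_closure ?_) _
    exact ⟨k, by omega, rfl⟩
end

section
/- Let K be a finite field of characteristic p and L a reduced finite-dimensional commutative K-algebra with a K-automorphism σ acting transitively on the (finitely many) prime ideals of L. Suppose that for each prime ideal 𝔭 of L, the Frobenius x ↦ x^p of L/𝔭 is induced by some power of σ. Then there exists a single integer z such that a^p = σ^z(a) for every a ∈ L. -/
theorem stmt_6 (p : ℕ) [Fact p.Prime] (K L : Type*) [Field K] [Finite K]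
    [CharP K p] [CommRing L] [IsReduced L] [Algebra K L] [FiniteDimensional K L]
    (σ : L ≃ₐ[K] L)
    (htrans : ∀ 𝔭 𝔮 : Ideal L, 𝔭.IsPrime → 𝔮.IsPrime →
      ∃ k : ℕ, ∀ a : L, a ∈ 𝔮 ↔ (σ ^ k) a ∈ 𝔭)
    (hfrob : ∀ 𝔭 : Ideal L, 𝔭.IsPrime →
      ∃ z : ℕ, ∀ a : L, (σ ^ z) a - a ^ p ∈ 𝔭) :
    ∃ z : ℕ, ∀ a : L, a ^ p = (σ ^ z) a := by
  rcases subsingleton_or_nontrivial L with hL | hL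
  · exact ⟨0, fun a => Subsingleton.elim _ _⟩
  obtain ⟨𝔪, h𝔪⟩ := Ideal.exists_maximal L
  have h𝔪p : 𝔪.IsPrime := h𝔪.isPrime
  obtain ⟨z, hz⟩ := hfrob 𝔪 h𝔪p
  refine ⟨z, fun a => ?_⟩
  have key : ∀ 𝔮 : Ideal L, 𝔮.IsPrime → (σ ^ z) a - a ^ p ∈ 𝔮 := by
    intro 𝔮 h𝔮
    obtain ⟨k, hk⟩ := htrans 𝔪 𝔮 h𝔪p h𝔮
    rw [hk]
    have : (σ ^ k) ((σ ^ z) a - a ^ p)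
        = (σ ^ z) ((σ ^ k) a) - ((σ ^ k) a) ^ p := by
      rw [map_sub, map_pow]
      congr 1
      have : (σ ^ k * σ ^ z) a = (σ ^ z * σ ^ k) a := by
        rw [← pow_add, ← pow_add, Nat.add_comm]
      simpa using this
    rw [this]
    exact hz _
  have hnil : IsNilpotent ((σ ^ z) a - a ^ p) := by
    rw [← mem_nilradical, nilradical_eq_sInf, Ideal.mem_sInf]
    intro J hJ
    exact key J hJ
  have := hnil.eq_zero
  have h0 : (σ ^ z) a - a ^ p = 0 := this
  exact (sub_eq_zero.mp h0).symm
end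

section
/- Let L be a ring, σ a ring automorphism of L acting transitively on the set of minimal/prime ideals of L, with L reduced. Let a ∈ L be a unit satisfying a^n = σ(a) for some n ≥ 2, and let 𝔭 be a prime ideal of L. If k is a positive integer with a^k ≡ 1 (mod 𝔭), then a^k = 1 in L. Consequently the order of a in L^× equals the order of (a mod 𝔭) in (L/𝔭)^×. -/
theorem stmt_8 (L : Type*) [CommRing L] [IsReduced L] (σ : RingAut L)
    (htrans : ∀ 𝔭 𝔮 : Ideal L, 𝔭.IsPrime → 𝔮.IsPrime →
      ∃ m : ℕ, ∀ x : L, x ∈ 𝔮 ↔ (σ ^ m) x ∈ 𝔭)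
    (n : ℕ) (hn : 2 ≤ n) (a : Lˣ) (ha : (a : L) ^ n = σ (a : L))
    (𝔭 : Ideal L) (h𝔭 : 𝔭.IsPrime) :
    (∀ k : ℕ, 0 < k → (a : L) ^ k - 1 ∈ 𝔭 → (a : L) ^ k = 1) ∧
    orderOf a = orderOf (Units.map (Ideal.Quotient.mk 𝔭).toMonoidHom a) := by
  have hσpow : ∀ m : ℕ, (σ ^ m) (a : L) = (a : L) ^ (n ^ m) := by
    intro m
    induction m with
    | zero => simp
    | succ m ih =>
      have : (σ ^ (m + 1)) (a : L) = σ ((σ ^ m) (a : L)) := by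
        rw [pow_succ']; rfl
      rw [this, ih, map_pow, ← ha, ← pow_mul, pow_succ, Nat.mul_comm]
  have key : ∀ k : ℕ, (a : L) ^ k - 1 ∈ 𝔭 → (a : L) ^ k = 1 := by
    intro k hk
    have hnil : (a : L) ^ k - 1 ∈ nilradical L := by
      rw [nilradical_eq_sInf]
      refine Ideal.mem_sInf.2 ?_
      rintro 𝔮 (h𝔮 : 𝔮.IsPrime)
      obtain ⟨m, hm⟩ := htrans 𝔭 𝔮 h𝔭 h𝔮
      refine (hm _).2 ?_
      have heq : (σ ^ m) ((a : L) ^ k - 1) = ((a : L) ^ k) ^ (n ^ m) - 1 ^ (n ^ m) := by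
        rw [map_sub, map_pow, map_one, hσpow, one_pow, ← pow_mul, ← pow_mul,
          Nat.mul_comm]
      rw [heq]
      exact Ideal.mem_of_dvd _ (sub_dvd_pow_sub_pow _ _ _) hk
    have h0 : (a : L) ^ k - 1 = 0 := (IsReduced.eq_zero _) hnil
    exact sub_eq_zero.mp h0
  constructor
  · exact fun k _ hk => key k hk
  · set f := Units.map (Ideal.Quotient.mk 𝔭).toMonoidHom with hf
    refine Nat.dvd_antisymm ?_ (orderOf_map_dvd f a)
    apply orderOf_dvd_of_pow_eq_one
    have h1 : (f a) ^ orderOf (f a) = 1 := pow_orderOf_eq_one _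
    have h2 : Ideal.Quotient.mk 𝔭 ((a : L) ^ orderOf (f a)) = 1 := by
      have := congrArg (Units.val) h1
      rw [map_pow]; rw [Units.val_pow_eq_pow_val, Units.val_one] at this; exact this
    have h3 : (a : L) ^ orderOf (f a) - 1 ∈ 𝔭 := by
      rw [← map_one (Ideal.Quotient.mk 𝔭)] at h2
      exact Ideal.Quotient.eq.mp h2
    ext
    simpa using key _ h3
end

section
/- Let R = ℤ/nℤ with n ≥ 3, d ≥ 2 a divisor of n−1, m = (n−1)/d, α ∈ R^× and ζ = α^m. Assume ζ has exact order d in the sense that ζ^d = 1 and ζ^k − 1 is a unit in R for every 1 ≤ k < d. Let S = R[x]/(x^d − α) and define the R-algebra endomorphism σ of S by σ(x) = ζx. Then σ is an automorphism of S of order d, and the element ω = 1 + x + x² + ⋯ + x^{d−1} satisfies: (ω, σ(ω), …, σ^{d−1}(ω)) is an R-basis of S. -/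
open Polynomial

theorem stmt_12 (n d m : ℕ) (hn : 3 ≤ n) (hd : 2 ≤ d) (hdvd : d ∣ n - 1)
    (hm : m = (n - 1) / d) (α : ZMod n) (hα : IsUnit α)
    (ζ : ZMod n) (hζ : ζ = α ^ m)
    (hζd : ζ ^ d = 1) (hζk : ∀ k : ℕ, 1 ≤ k → k < d → IsUnit (ζ ^ k - 1))
    (f : Polynomial (ZMod n)) (hf : f = X ^ d - C α)
    (σ : AdjoinRoot f →ₐ[ZMod n] AdjoinRoot f)
    (hσ : σ (AdjoinRoot.root f) = AdjoinRoot.of f ζ * AdjoinRoot.root f) :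
    Function.Bijective σ ∧ orderOf σ = d ∧
      ∃ b : Module.Basis (Fin d) (ZMod n) (AdjoinRoot f),
        ∀ k : Fin d,
          b k = (σ ^ (k : ℕ)) (∑ i ∈ Finset.range d, AdjoinRoot.root f ^ i) := by
  haveI : NeZero n := ⟨by omega⟩
  haveI : Fact (1 < n) := ⟨by omega⟩
  have hd0 : d ≠ 0 := by omega
  have hmon : f.Monic := hf ▸ monic_X_pow_sub_C α hd0
  have hdeg : f.natDegree = d := by rw [hf, natDegree_X_pow_sub_C]
  have hζu : IsUnit ζ := hζ ▸ hα.pow m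
  -- the power basis
  set pb := AdjoinRoot.powerBasis' hmon with hpb
  set b0 := pb.basis.reindex (finCongr hdeg) with hb0
  have hb0k : ∀ k : Fin d, b0 k = AdjoinRoot.root f ^ (k : ℕ) := by
    intro k
    rw [hb0, Module.Basis.reindex_apply, pb.basis_eq_pow]
    simp [hpb, AdjoinRoot.powerBasis']
    rfl
  -- σ^k on root
  have hσpow : ∀ k : ℕ, (σ ^ k) (AdjoinRoot.root f)
      = AdjoinRoot.of f (ζ ^ k) * AdjoinRoot.root f := by
    intro k
    induction k with
    | zero => simp
    | succ k ih =>
      rw [pow_succ, AlgHom.mul_apply, hσ, map_mul, ih]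
      have : (σ ^ k) (AdjoinRoot.of f ζ) = AdjoinRoot.of f ζ := by
        rw [← AdjoinRoot.algebraMap_eq]
        exact AlgHom.commutes _ ζ
      rw [this, ← mul_assoc, ← map_mul, pow_succ, mul_comm ζ]
  have hσd : σ ^ d = 1 := by
    apply AdjoinRoot.algHom_ext
    rw [hσpow, hζd, map_one, one_mul]
    rfl
  -- bijectivity
  have hbij : Function.Bijective σ := by
    refine Function.bijective_iff_has_inverse.mpr ⟨fun y => (σ ^ (d - 1)) y, ?_, ?_⟩
    · intro x
      have : (σ ^ (d - 1) * σ) x = (1 : AdjoinRoot f →ₐ[ZMod n] AdjoinRoot f) x := by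
        rw [← pow_succ, Nat.sub_add_cancel (by omega), hσd]
      simpa [AlgHom.mul_apply] using this
    · intro x
      have : (σ * σ ^ (d - 1)) x = (1 : AdjoinRoot f →ₐ[ZMod n] AdjoinRoot f) x := by
        rw [← pow_succ', Nat.sub_add_cancel (by omega), hσd]
      simpa [AlgHom.mul_apply] using this
  have hroot_ne : AdjoinRoot.root f ≠ 0 := by
    have := b0.ne_zero ⟨1, by omega⟩
    rwa [hb0k, pow_one] at this
  -- order of σ
  have horder : orderOf σ = d := by
    rw [orderOf_eq_iff (by omega)]
    refine ⟨hσd, fun k hk hk0 hcontra => ?_⟩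
    have h1 : (σ ^ k) (AdjoinRoot.root f) = AdjoinRoot.root f := by
      rw [hcontra]; rfl
    rw [hσpow] at h1
    have h2 : AdjoinRoot.of f (ζ ^ k - 1) * AdjoinRoot.root f = 0 := by
      rw [map_sub, map_one, sub_mul, one_mul, h1, sub_self]
    have hu : IsUnit (AdjoinRoot.of f (ζ ^ k - 1)) :=
      (hζk k hk0 hk).map (AdjoinRoot.of f)
    exact hroot_ne ((hu.mul_right_eq_zero).mp h2)
  refine ⟨hbij, horder, ?_⟩
  -- the Vandermonde matrix
  set A : Matrix (Fin d) (Fin d) (ZMod n) :=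
    Matrix.transpose (Matrix.vandermonde fun i : Fin d => ζ ^ (i : ℕ)) with hA
  have hdet : IsUnit A.det := by
    rw [hA, Matrix.det_transpose, Matrix.det_vandermonde]
    refine Finset.prod_induction _ IsUnit (fun a b ha hb => ha.mul hb) isUnit_one
      (fun i _ => ?_)
    refine Finset.prod_induction _ IsUnit (fun a b ha hb => ha.mul hb) isUnit_one
      (fun j hj => ?_)
    have hij : (i : ℕ) < (j : ℕ) := Fin.lt_iff_val_lt_val.mp (Finset.mem_Ioi.mp hj)
    have : ζ ^ (j : ℕ) - ζ ^ (i : ℕ) = ζ ^ (i : ℕ) * (ζ ^ ((j : ℕ) - (i : ℕ)) - 1) := by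
      rw [mul_sub, mul_one, ← pow_add, Nat.add_sub_cancel' hij.le]
    rw [this]
    exact (hζu.pow _).mul (hζk _ (by omega) (by omega : (j : ℕ) - (i : ℕ) < d))
  refine ⟨b0.map (A.toLinearEquiv b0 hdet), fun k => ?_⟩
  rw [Module.Basis.map_apply, Matrix.toLinearEquiv_apply, Matrix.toLin_self]
  rw [map_sum]
  rw [Finset.sum_range fun i => (σ ^ (k : ℕ)) (AdjoinRoot.root f ^ i)]
  refine Finset.sum_congr rfl fun i _ => ?_
  rw [map_pow, hσpow, mul_pow, ← map_pow, hb0k, Algebra.smul_def, AdjoinRoot.algebraMap_eq]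
  congr 1
end

section
/- Let d ≥ 3 be odd, and let I ⊂ ℤ^d be the set of vectors with coordinate sum 0 and L¹-norm at most d−1, and let J ⊆ I be the subset additionally satisfying Σ k·e_k ≡ 0 (mod d) (indices k lifted from ℤ/dℤ). Then #J ≥ #I / (d(d−1) + 1). In particular #J ≥ #I / d². -/
theorem stmt_17 (d : ℕ) (hd : 3 ≤ d) (hodd : Odd d) :
    (d * (d - 1) + 1) *
        Set.ncard {e : Fin d → ℤ | (∑ k : Fin d, e k) = 0 ∧
          (∑ k : Fin d, |e k|) ≤ (d : ℤ) - 1 ∧ (d : ℤ) ∣ ∑ k : Fin d, (k : ℤ) * e k}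
      ≥ Set.ncard {e : Fin d → ℤ | (∑ k : Fin d, e k) = 0 ∧
          (∑ k : Fin d, |e k|) ≤ (d : ℤ) - 1} ∧
    d ^ 2 *
        Set.ncard {e : Fin d → ℤ | (∑ k : Fin d, e k) = 0 ∧
          (∑ k : Fin d, |e k|) ≤ (d : ℤ) - 1 ∧ (d : ℤ) ∣ ∑ k : Fin d, (k : ℤ) * e k}
      ≥ Set.ncard {e : Fin d → ℤ | (∑ k : Fin d, e k) = 0 ∧
          (∑ k : Fin d, |e k|) ≤ (d : ℤ) - 1} := by
  classical
  have hd0 : (0:ℤ) < d := by exact_mod_cast Nat.lt_of_lt_of_le (by norm_num) hd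
  set J : Set (Fin d → ℤ) := {e : Fin d → ℤ | (∑ k : Fin d, e k) = 0 ∧
          (∑ k : Fin d, |e k|) ≤ (d : ℤ) - 1 ∧ (d : ℤ) ∣ ∑ k : Fin d, (k : ℤ) * e k} with hJdef
  set I : Set (Fin d → ℤ) := {e : Fin d → ℤ | (∑ k : Fin d, e k) = 0 ∧
          (∑ k : Fin d, |e k|) ≤ (d : ℤ) - 1} with hIdef
  -- finiteness
  have hIfin : I.Finite := by
    apply Set.Finite.subset (Set.Finite.pi (fun i : Fin d => Set.finite_Icc (-(d:ℤ)) d))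
    intro e he
    rw [Set.mem_pi]
    intro i _
    have h1 : |e i| ≤ ∑ k : Fin d, |e k| :=
      Finset.single_le_sum (fun k _ => abs_nonneg (e k)) (Finset.mem_univ i)
    have h2 := he.2
    constructor
    · linarith [neg_abs_le (e i)]
    · linarith [le_abs_self (e i)]
  have hJI : J ⊆ I := fun e he => ⟨he.1, he.2.1⟩
  have hJfin : J.Finite := hIfin.subset hJI
  -- the inverse shift maps
  set g : Fin d × Fin d → (Fin d → ℤ) → (Fin d → ℤ) :=
    fun p e i => e i - (if i = p.1 then 1 else 0) + (if i = p.2 then 1 else 0) with hgdef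
  set JF : Finset (Fin d → ℤ) := hJfin.toFinset with hJFdef
  set F : Finset (Fin d → ℤ) :=
    JF ∪ (Finset.univ.offDiag).biUnion (fun p => JF.image (g p)) with hFdef
  have hsub : I ⊆ ↑F := by
    intro e he
    set s : ℤ := ∑ k : Fin d, (k : ℤ) * e k with hsdef
    by_cases hdvd : (d:ℤ) ∣ s
    · apply Finset.mem_coe.mpr
      exact Finset.mem_union_left _ (hJfin.mem_toFinset.mpr ⟨he.1, he.2, hdvd⟩)
    · -- find l with e l > 0
      have hl : ∃ l, 0 < e l := by
        by_contra hc
        push_neg at hc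
        have hz : ∀ i ∈ Finset.univ, e i = 0 :=
          (Finset.sum_eq_zero_iff_of_nonpos (fun i _ => hc i)).mp he.1
        apply hdvd
        have hs0 : s = 0 :=
          Finset.sum_eq_zero (fun i hi => by rw [hz i hi, mul_zero])
        simp [hs0]
      obtain ⟨l, hlpos⟩ := hl
      set m : ℤ := ((l:ℤ) - s) % d with hmdef
      have hm0 : 0 ≤ m := Int.emod_nonneg _ (by positivity)
      have hmlt : m < d := Int.emod_lt_of_pos _ hd0
      have hmk : ((l:ℤ) - s) - m = d * (((l:ℤ) - s) / d) := by
        rw [hmdef, Int.emod_def]; ring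
      set k : Fin d := ⟨m.toNat, by omega⟩ with hkdef
      have hkval : (k : ℤ) = m := by
        simp [hkdef, Int.toNat_of_nonneg hm0]
      have hkl : k ≠ l := by
        intro hkl
        apply hdvd
        have hlm : (l:ℤ) = m := by rw [← hkval, hkl]
        have hds : (d:ℤ) ∣ -s := by
          rw [show -s = ((l:ℤ) - s) - m by omega, hmk]
          exact Dvd.intro _ rfl
        exact (dvd_neg.mp hds)
      set j : Fin d → ℤ := fun i => e i + (if i = k then 1 else 0) - (if i = l then 1 else 0)
        with hjdef
      have hjJ : j ∈ J := by
        refine ⟨?_, ?_, ?_⟩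
        · simp [hjdef, Finset.sum_add_distrib, Finset.sum_sub_distrib, he.1]
        · have hterm : ∀ i ∈ Finset.univ, |j i| ≤
              |e i| + (if i = k then 1 else 0) - (if i = l then 1 else 0) := by
            intro i _
            by_cases hik : i = k
            · have hil : i ≠ l := by rw [hik]; exact hkl
              simp only [hjdef, if_pos hik, if_neg hil, sub_zero]
              calc |e i + 1| ≤ |e i| + |(1:ℤ)| := abs_add_le _ _
                _ = |e i| + 1 := by norm_num
            · by_cases hil : i = l
              · have hei : 0 < e i := hil ▸ hlpos
                simp only [hjdef, if_neg hik, if_pos hil, add_zero]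
                have h1 : |e i - 1| = e i - 1 := abs_of_nonneg (by omega)
                have h2 : e i ≤ |e i| := le_abs_self _
                omega
              · simp [hjdef, hik, hil]
          calc ∑ i : Fin d, |j i|
              ≤ ∑ i : Fin d, (|e i| + (if i = k then 1 else 0) - (if i = l then 1 else 0)) :=
                Finset.sum_le_sum hterm
            _ = ∑ i : Fin d, |e i| := by
                simp [Finset.sum_add_distrib, Finset.sum_sub_distrib]
            _ ≤ (d:ℤ) - 1 := he.2
        · have hws : ∑ i : Fin d, (i:ℤ) * j i = s + (k:ℤ) - (l:ℤ) := by
            simp [hjdef, mul_add, mul_sub, Finset.sum_add_distrib, Finset.sum_sub_distrib,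
              mul_ite, Finset.sum_ite_eq', hsdef]
          rw [hws, hkval]
          rw [show s + m - (l:ℤ) = -(((l:ℤ) - s) - m) by ring, hmk]
          exact (Dvd.intro _ rfl).neg_right
      have hge : g (k, l) j = e := by
        funext i
        simp only [hgdef, hjdef]
        ring
      apply Finset.mem_coe.mpr
      apply Finset.mem_union_right
      apply Finset.mem_biUnion.mpr
      exact ⟨(k, l), Finset.mem_offDiag.mpr ⟨Finset.mem_univ _, Finset.mem_univ _, hkl⟩,
        Finset.mem_image.mpr ⟨j, hJfin.mem_toFinset.mpr hjJ, hge⟩⟩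
  -- counting
  have hJFcard : JF.card = J.ncard := (Set.ncard_eq_toFinset_card J hJfin).symm
  have hIcard : I.ncard ≤ F.card := by
    rw [← Set.ncard_coe_finset]
    exact Set.ncard_le_ncard hsub F.finite_toSet
  have hdd : d * d - d = d * (d - 1) := by
    obtain ⟨mm, rfl⟩ : ∃ mm, d = mm + 1 := ⟨d - 1, by omega⟩
    have h : (mm+1)*(mm+1) = (mm+1)*mm + (mm+1) := by ring
    simp [h, Nat.add_sub_cancel]
  have hFcard : F.card ≤ (d * (d-1) + 1) * J.ncard := by
    calc F.card ≤ JF.card + ((Finset.univ.offDiag).biUnion (fun p => JF.image (g p))).card :=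
        Finset.card_union_le _ _
      _ ≤ JF.card + ∑ p ∈ Finset.univ.offDiag, (JF.image (g p)).card :=
          Nat.add_le_add_left Finset.card_biUnion_le _
      _ ≤ JF.card + ∑ p ∈ Finset.univ.offDiag, JF.card :=
          Nat.add_le_add_left (Finset.sum_le_sum (fun p _ => Finset.card_image_le)) _
      _ = (d * (d-1) + 1) * JF.card := by
          rw [Finset.sum_const, smul_eq_mul, Finset.offDiag_card, Finset.card_univ,
            Fintype.card_fin, hdd]
          ring
      _ = (d * (d-1) + 1) * J.ncard := by rw [hJFcard]
  have hmain : (d * (d - 1) + 1) * J.ncard ≥ I.ncard := le_trans hIcard hFcard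
  refine ⟨hmain, le_trans hmain ?_⟩
  have hsq : d * (d-1) + 1 ≤ d ^ 2 := by
    obtain ⟨n, rfl⟩ : ∃ n, d = n + 3 := ⟨d - 3, by omega⟩
    have h1 : n + 3 - 1 = n + 2 := rfl
    rw [h1]
    nlinarith
  exact Nat.mul_le_mul_right _ hsq
end

section
/- Let K be a field, E an elliptic curve over K, d ≥ 3 odd, T ∈ E(K) a point of order d, and I : E → E′ the degree-d separable isogeny with kernel ⟨T⟩. Let (u_k)_{k ∈ ℤ/dℤ} be functions in K(E) each having divisor of poles [kT] + [(k+1)T] (simple poles at kT and (k+1)T, regular elsewhere) with Σ_k u_k = 1. If scalars (λ_k)_{k ∈ ℤ/dℤ} in K satisfy Σ_k λ_k u_k = 0, then all λ_k are equal, and hence all λ_k = 0; consequently the u_k are K-linearly independent and form a basis of the Riemann–Roch space L([O] + [T] + ⋯ + [(d−1)T]). -/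
/-- Abstract formulation of the normal-basis independence lemma. `F` plays the
role of the function field `K(E)` of the elliptic curve, `val P` is the
order-of-vanishing valuation at the point `P·T` of the cyclic kernel
`⟨T⟩ ≅ ℤ/dℤ` of the degree-`d` isogeny `I : E → E'` (trivial on constants),
`u k` are the functions with simple poles exactly at `kT` and `(k+1)T`
normalized so that `∑ u k = 1`, and `LD` is the Riemann–Roch space
`L([O] + [T] + ⋯ + [(d−1)T])`, which has dimension `d` by Riemann–Roch. -/
theorem stmt_19 (K F : Type*) [Field K] [Field F] [Algebra K F]
    (d : ℕ) [NeZero d] (hd : 3 ≤ d) (hodd : Odd d)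
    (val : ZMod d → AddValuation F (WithTop ℤ))
    (hval_triv : ∀ P : ZMod d, ∀ c : K, c ≠ 0 → val P (algebraMap K F c) = 0)
    (u : ZMod d → F)
    (hpole : ∀ k P : ZMod d, (P = k ∨ P = k + 1) → val P (u k) = ((-1 : ℤ) : WithTop ℤ))
    (hreg : ∀ k P : ZMod d, P ≠ k → P ≠ k + 1 → ((0 : ℤ) : WithTop ℤ) ≤ val P (u k))
    (hsum : (∑ k : ZMod d, u k) = 1)
    (LD : Submodule K F) (hLD : Module.finrank K ↥LD = d)
    (hmem : ∀ k : ZMod d, u k ∈ LD) :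
    (∀ lam : ZMod d → K, (∑ k : ZMod d, lam k • u k) = 0 →
      (∀ k l : ZMod d, lam k = lam l) ∧ ∀ k : ZMod d, lam k = 0) ∧
    LinearIndependent K u ∧ Submodule.span K (Set.range u) = LD := by
  haveI : Fact (1 < d) := ⟨by omega⟩
  have hone : (1 : ZMod d) ≠ 0 := one_ne_zero
  -- auxiliary: val of a scalar multiple is at least val of the vector
  have hsmul : ∀ (P : ZMod d) (c : K) (x : F), val P x ≤ val P (c • x) := by
    intro P c x
    rcases eq_or_ne c 0 with rfl | hc
    · simp [AddValuation.map_zero, le_top]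
    · rw [Algebra.smul_def, AddValuation.map_mul, hval_triv P c hc, zero_add]
  have hsmul' : ∀ (P : ZMod d) (c : K) (x : F), c ≠ 0 → val P (c • x) = val P x := by
    intro P c x hc
    rw [Algebra.smul_def, AddValuation.map_mul, hval_triv P c hc, zero_add]
  -- key step: if ∑ lam k • u k = 0 then lam (j-1) = lam j for every j
  have key : ∀ lam : ZMod d → K, (∑ k : ZMod d, lam k • u k) = 0 →
      ∀ j : ZMod d, lam (j - 1) = lam j := by
    intro lam hlam j
    by_contra hne
    have hc : lam (j - 1) - lam j ≠ 0 := sub_ne_zero.2 hne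
    have hj1 : (j - 1 : ZMod d) ≠ j := by
      intro h
      exact hone (by rwa [sub_eq_self] at h)
    -- the sum ∑ (lam k - lam j) • u k equals -algebraMap (lam j)
    have hS : (∑ k : ZMod d, (lam k - lam j) • u k) = - algebraMap K F (lam j) := by
      have : (∑ k : ZMod d, (lam k - lam j) • u k)
          = (∑ k : ZMod d, lam k • u k) - lam j • (∑ k : ZMod d, u k) := by
        rw [Finset.smul_sum, ← Finset.sum_sub_distrib]
        exact Finset.sum_congr rfl fun k _ => by rw [sub_smul]
      rw [this, hlam, hsum, zero_sub, Algebra.smul_def, mul_one]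
    -- split off the terms k = j and k = j - 1
    set S : Finset (ZMod d) := (Finset.univ.erase j).erase (j - 1) with hSdef
    have hmemj : (j - 1 : ZMod d) ∈ Finset.univ.erase j :=
      Finset.mem_erase.2 ⟨hj1, Finset.mem_univ _⟩
    have hsplit : (lam (j - 1) - lam j) • u (j - 1)
        = - algebraMap K F (lam j) - ∑ k ∈ S, (lam k - lam j) • u k := by
      have h1 : (∑ k : ZMod d, (lam k - lam j) • u k)
          = (lam j - lam j) • u j + ∑ k ∈ Finset.univ.erase j, (lam k - lam j) • u k :=
        (Finset.add_sum_erase _ _ (Finset.mem_univ j)).symm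
      have h2 : (∑ k ∈ Finset.univ.erase j, (lam k - lam j) • u k)
          = (lam (j - 1) - lam j) • u (j - 1) + ∑ k ∈ S, (lam k - lam j) • u k :=
        (Finset.add_sum_erase _ _ hmemj).symm
      rw [h1, h2, sub_self, zero_smul, zero_add] at hS
      rw [← hS]; ring
    -- LHS has valuation -1 at j
    have hlhs : val j ((lam (j - 1) - lam j) • u (j - 1)) = ((-1 : ℤ) : WithTop ℤ) := by
      rw [hsmul' j _ _ hc]
      exact hpole (j - 1) j (Or.inr (by ring))
    -- RHS has valuation ≥ 0 at j
    have hrhs : ((0 : ℤ) : WithTop ℤ) ≤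
        val j (- algebraMap K F (lam j) - ∑ k ∈ S, (lam k - lam j) • u k) := by
      apply AddValuation.map_le_sub
      · rw [AddValuation.map_neg]
        rcases eq_or_ne (lam j) 0 with h | h
        · simp [h, AddValuation.map_zero, le_top]
        · rw [hval_triv j _ h]; exact_mod_cast le_refl (0:ℤ)
      · apply AddValuation.map_le_sum
        intro k hk
        rw [hSdef, Finset.mem_erase, Finset.mem_erase] at hk
        refine le_trans ?_ (hsmul j _ _)
        apply hreg
        · exact fun h => hk.2.1 (h ▸ rfl)
        · intro h
          exact hk.1 (by rw [h]; ring)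
    rw [← hsplit, hlhs] at hrhs
    have : ¬ ((0 : ℤ) : WithTop ℤ) ≤ ((-1 : ℤ) : WithTop ℤ) := by
      simp only [WithTop.coe_le_coe]; omega
    exact this hrhs
  -- from the key step: all lam are equal
  have hall : ∀ lam : ZMod d → K, (∑ k : ZMod d, lam k • u k) = 0 →
      ∀ k l : ZMod d, lam k = lam l := by
    intro lam hlam k l
    have step : ∀ j : ZMod d, lam j = lam (j + 1) := by
      intro j
      have := key lam hlam (j + 1)
      rwa [add_sub_cancel_right] at this
    have hnat : ∀ n : ℕ, ∀ j : ZMod d, lam j = lam (j + n) := by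
      intro n
      induction n with
      | zero => intro j; simp
      | succ m ih =>
        intro j
        rw [ih j, Nat.cast_add, Nat.cast_one, ← add_assoc]
        exact step (j + m)
    have : l = k + ((l - k).val : ZMod d) := by
      rw [ZMod.natCast_val, ZMod.cast_id]
      ring
    rw [this]
    exact hnat _ k
  -- main zero conclusion
  have hzero : ∀ lam : ZMod d → K, (∑ k : ZMod d, lam k • u k) = 0 →
      ∀ k : ZMod d, lam k = 0 := by
    intro lam hlam k
    have heq := hall lam hlam
    have : (∑ j : ZMod d, lam j • u j) = lam k • (∑ j : ZMod d, u j) := by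
      rw [Finset.smul_sum]
      exact Finset.sum_congr rfl fun j _ => by rw [heq j k]
    rw [this, hsum] at hlam
    have : algebraMap K F (lam k) = 0 := by rwa [Algebra.smul_def, mul_one] at hlam
    exact (map_eq_zero (algebraMap K F)).1 this
  have hind : LinearIndependent K u :=
    Fintype.linearIndependent_iff.2 fun g hg => hzero g hg
  refine ⟨fun lam hlam => ⟨hall lam hlam, hzero lam hlam⟩, hind, ?_⟩
  have hle : Submodule.span K (Set.range u) ≤ LD :=
    Submodule.span_le.2 (Set.range_subset_iff.2 hmem)
  haveI : FiniteDimensional K LD :=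
    FiniteDimensional.of_finrank_pos (by rw [hLD]; omega)
  apply Submodule.eq_of_le_of_finrank_eq hle
  rw [finrank_span_eq_card hind, hLD, ZMod.card]
end
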